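/- Let ω ∈ KL. Then there exists Ω ∈ KL such that sup_{0 ≤ τ ≤ t} ω(ω(r,τ), t−τ) ≤ Ω(r,t) for all r,t ≥ 0. -/

import Mathlib

open Set Filter

/-
Split the interval at `t/2`. If `τ ≤ t/2` then `t - τ ≥ t/2` and `ω(r,τ) ≤ ω(r,0)`, so the term is
at most `ω(ω(r,0), t/2)`; if `τ ≥ t/2` then `ω(r,τ) ≤ ω(r,t/2)` and `t - τ ≥ 0`, so it is at most
`ω(ω(r,t/2), 0)`. The sum of these two bounds is again of class `KL`, because `KL` is closed under
sums, under rescaling time, and under composition with class-`K` functions on either side.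
-/

/-- A class-`KL` function `[0,∞)² → [0,∞)`: continuous, of class `K` in the first argument
for each fixed second argument, and non-increasing with limit `0` at infinity in the second
argument for each fixed first argument. -/
def IsKL (f : ℝ → ℝ → ℝ) : Prop :=
  ContinuousOn (fun p : ℝ × ℝ => f p.1 p.2) (Ici 0 ×ˢ Ici 0) ∧
  (∀ t ∈ Ici (0:ℝ), StrictMonoOn (fun s => f s t) (Ici 0) ∧ f 0 t = 0) ∧
  (∀ s ∈ Ici (0:ℝ), ∀ t ∈ Ici (0:ℝ), 0 ≤ f s t) ∧
  (∀ s ∈ Ici (0:ℝ), AntitoneOn (fun t => f s t) (Ici 0) ∧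
    Tendsto (fun t => f s t) atTop (nhds 0))

def IsK (α : ℝ → ℝ) : Prop :=
  ContinuousOn α (Ici 0) ∧ StrictMonoOn α (Ici 0) ∧ α 0 = 0

namespace IsK

variable {α : ℝ → ℝ}

theorem nonneg (hα : IsK α) {s : ℝ} (hs : 0 ≤ s) : 0 ≤ α s := by
  rcases hs.eq_or_lt with rfl | hs
  · exact hα.2.2.ge
  · exact hα.2.2 ▸ (hα.2.1 self_mem_Ici hs.le hs).le

end IsK

namespace IsKL

variable {f g : ℝ → ℝ → ℝ} {s t : ℝ}

theorem strictMonoOn (hf : IsKL f) (ht : 0 ≤ t) : StrictMonoOn (fun s => f s t) (Ici 0) :=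
  (hf.2.1 t ht).1

theorem zero_left (hf : IsKL f) (ht : 0 ≤ t) : f 0 t = 0 :=
  (hf.2.1 t ht).2

theorem nonneg (hf : IsKL f) (hs : 0 ≤ s) (ht : 0 ≤ t) : 0 ≤ f s t :=
  hf.2.2.1 s hs t ht

theorem antitoneOn (hf : IsKL f) (hs : 0 ≤ s) : AntitoneOn (fun t => f s t) (Ici 0) :=
  (hf.2.2.2 s hs).1

theorem tendsto_atTop (hf : IsKL f) (hs : 0 ≤ s) : Tendsto (fun t => f s t) atTop (nhds 0) :=
  (hf.2.2.2 s hs).2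

theorem mono_left (hf : IsKL f) (ht : 0 ≤ t) {s' : ℝ} (hs : 0 ≤ s) (hss' : s ≤ s') :
    f s t ≤ f s' t :=
  (hf.strictMonoOn ht).monotoneOn hs (hs.trans hss') hss'

theorem anti_right (hf : IsKL f) (hs : 0 ≤ s) {t' : ℝ} (ht : 0 ≤ t) (htt' : t ≤ t') :
    f s t' ≤ f s t :=
  hf.antitoneOn hs ht (ht.trans htt') htt'

theorem mapsTo (hf : IsKL f) : MapsTo (fun p : ℝ × ℝ => f p.1 p.2) (Ici 0 ×ˢ Ici 0) (Ici 0) :=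
  fun _ hp => hf.nonneg hp.1 hp.2

theorem isK (hf : IsKL f) (ht : 0 ≤ t) : IsK (fun s => f s t) :=
  ⟨hf.1.comp (continuousOn_id.prodMk continuousOn_const) fun _ hs => ⟨hs, ht⟩,
    hf.strictMonoOn ht, hf.zero_left ht⟩

theorem add (hf : IsKL f) (hg : IsKL g) : IsKL (fun s t => f s t + g s t) := by
  refine ⟨hf.1.add hg.1, fun t ht => ⟨?_, ?_⟩, fun s hs t ht => ?_, fun s hs => ⟨?_, ?_⟩⟩
  · exact fun a ha b hb hab =>
      add_lt_add (hf.strictMonoOn ht ha hb hab) (hg.strictMonoOn ht ha hb hab)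
  · simp only [hf.zero_left ht, hg.zero_left ht, add_zero]
  · exact add_nonneg (hf.nonneg hs ht) (hg.nonneg hs ht)
  · exact fun a ha b hb hab =>
      add_le_add (hf.antitoneOn hs ha hb hab) (hg.antitoneOn hs ha hb hab)
  · simpa using (hf.tendsto_atTop hs).add (hg.tendsto_atTop hs)

theorem comp_div (hf : IsKL f) {c : ℝ} (hc : 0 < c) : IsKL (fun s t => f s (t / c)) := by
  have hdiv : ∀ {t : ℝ}, 0 ≤ t → 0 ≤ t / c := fun ht => div_nonneg ht hc.le
  refine ⟨hf.1.comp (continuousOn_fst.prodMk (continuousOn_snd.div_const c))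
      fun p hp => ⟨hp.1, hdiv hp.2⟩,
    fun t ht => ⟨hf.strictMonoOn (hdiv ht), hf.zero_left (hdiv ht)⟩,
    fun s hs t ht => hf.nonneg hs (hdiv ht), fun s hs => ⟨?_, ?_⟩⟩
  · exact fun a ha b hb hab =>
      hf.antitoneOn hs (hdiv ha) (hdiv hb) (div_le_div_of_nonneg_right hab hc.le)
  · exact (hf.tendsto_atTop hs).comp (tendsto_id.atTop_div_const hc)

theorem comp_isK (hf : IsKL f) {α : ℝ → ℝ} (hα : IsK α) : IsKL (fun s t => f (α s) t) := by
  refine ⟨hf.1.comp ((hα.1.comp continuousOn_fst fun _ hp => hp.1).prodMk continuousOn_snd)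
      fun p hp => ⟨hα.nonneg hp.1, hp.2⟩,
    fun t ht => ⟨?_, by simp only [hα.2.2, hf.zero_left ht]⟩,
    fun s hs t ht => hf.nonneg (hα.nonneg hs) ht,
    fun s hs => ⟨hf.antitoneOn (hα.nonneg hs), hf.tendsto_atTop (hα.nonneg hs)⟩⟩
  exact (hf.strictMonoOn ht).comp hα.2.1 fun _ hs => hα.nonneg hs

end IsKL

theorem IsK.comp_isKL {α : ℝ → ℝ} (hα : IsK α) {f : ℝ → ℝ → ℝ} (hf : IsKL f) :
    IsKL (fun s t => α (f s t)) := by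
  refine ⟨hα.1.comp hf.1 hf.mapsTo,
    fun t ht => ⟨hα.2.1.comp (hf.strictMonoOn ht) fun _ hs => hf.nonneg hs ht,
      by simp only [hf.zero_left ht, hα.2.2]⟩,
    fun s hs t ht => hα.nonneg (hf.nonneg hs ht), fun s hs => ⟨?_, ?_⟩⟩
  · exact fun a ha b hb hab =>
      hα.2.1.monotoneOn (hf.nonneg hs hb) (hf.nonneg hs ha) (hf.antitoneOn hs ha hb hab)
  · have hlim : Tendsto (fun t => f s t) atTop (nhdsWithin 0 (Ici 0)) :=
      tendsto_nhdsWithin_iff.mpr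
        ⟨hf.tendsto_atTop hs, eventually_atTop.mpr ⟨0, fun t ht => hf.nonneg hs ht⟩⟩
    simpa only [hα.2.2, Function.comp_def] using (hα.1 0 self_mem_Ici).tendsto.comp hlim

theorem IsKL.comp_sub_le_add_halves {ω : ℝ → ℝ → ℝ} (hω : IsKL ω) {r t τ : ℝ} (hr : 0 ≤ r)
    (hτ : τ ∈ Icc 0 t) :
    ω (ω r τ) (t - τ) ≤ ω (ω r 0) (t / 2) + ω (ω r (t / 2)) 0 := by
  obtain ⟨hτ0, hτt⟩ := hτ
  have ht2 : 0 ≤ t / 2 := by linarith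
  have hωrτ : 0 ≤ ω r τ := hω.nonneg hr hτ0
  rcases le_total τ (t / 2) with hτ2 | hτ2
  · calc ω (ω r τ) (t - τ) ≤ ω (ω r τ) (t / 2) := hω.anti_right hωrτ ht2 (by linarith)
      _ ≤ ω (ω r 0) (t / 2) := hω.mono_left ht2 hωrτ (hω.anti_right hr le_rfl hτ0)
      _ ≤ _ := le_add_of_nonneg_right (hω.nonneg (hω.nonneg hr ht2) le_rfl)
  · calc ω (ω r τ) (t - τ) ≤ ω (ω r τ) 0 := hω.anti_right hωrτ le_rfl (by linarith)
      _ ≤ ω (ω r (t / 2)) 0 := hω.mono_left le_rfl hωrτ (hω.anti_right hr ht2 hτ2)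
      _ ≤ _ := le_add_of_nonneg_left (hω.nonneg (hω.nonneg hr le_rfl) ht2)

/-- For any `ω ∈ KL` there exists `Ω ∈ KL` dominating the composed estimate:
`sup_{0 ≤ τ ≤ t} ω(ω(r,τ), t−τ) ≤ Ω(r,t)` for all `r,t ≥ 0`. -/
theorem stmt11 (ω : ℝ → ℝ → ℝ) (hω : IsKL ω) :
    ∃ Ω : ℝ → ℝ → ℝ, IsKL Ω ∧
      ∀ r ∈ Ici (0:ℝ), ∀ t ∈ Ici (0:ℝ), ∀ τ ∈ Icc (0:ℝ) t,
        ω (ω r τ) (t - τ) ≤ Ω r t :=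
  ⟨fun r t => ω (ω r 0) (t / 2) + ω (ω r (t / 2)) 0,
    ((hω.comp_isK (hω.isK le_rfl)).comp_div two_pos).add
      (((hω.isK le_rfl).comp_isKL hω).comp_div two_pos),
    fun _ hr _ _ _ hτ => hω.comp_sub_le_add_halves hr hτ⟩
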